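/- arXiv:1909.13290 — 3 statements merged into one kernel-verified Lean document; each statement's English description precedes it below -/
import Mathlib

section
/- Let C ≥ 0, p ≥ 0 be real numbers and let F : Γ → ℂ satisfy |F(σ)| ≤ C·λ_σ^p for all σ ∈ Γ. Then for every real q > p + 1/2, the series ∑_{σ ∈ Γ} λ_σ^{-2q} |F(σ)|² converges, the series ∑_{σ ∈ Γ} λ_σ^{-2(q-p)} converges, and ‖F‖_{-q} ≤ C·(∑_{σ ∈ Γ} λ_σ^{-2(q-p)})^{1/2}. -/
/-! Bounding `|F(σ)|²` by `C² λ_σ^{2p}` reduces everything to the summability of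
`σ ↦ λ_σ^{-r}` for `r = 2(q - p) > 1`. Since `λ_σ^{-r} = ∏_{k ∈ σ} (k+1)^{-r}` is multiplicative,
its partial sums over subsets of a finite `T` are dominated by
`∏_{k ∈ T} (1 + (k+1)^{-r}) ≤ exp (∑_k (k+1)^{-r}) < ∞`. -/

open scoped BigOperators

/-- `λ_σ = ∏_{k ∈ σ} (k+1)`, with `λ_∅ = 1`. -/
noncomputable def lam (σ : Finset ℕ) : ℝ := ∏ k ∈ σ, ((k : ℝ) + 1)

theorem summable_finset_prod_of_summable {α : Type*} {a : α → ℝ} (ha0 : ∀ k, 0 ≤ a k)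
    (ha : Summable a) : Summable fun s : Finset α => ∏ k ∈ s, a k := by
  classical
  refine summable_of_sum_le (c := Real.exp (∑' k, a k))
    (fun s => Finset.prod_nonneg fun k _ => ha0 k) fun u => ?_
  set T := u.sup id
  calc ∑ s ∈ u, ∏ k ∈ s, a k
      ≤ ∑ s ∈ T.powerset, ∏ k ∈ s, a k :=
        Finset.sum_le_sum_of_subset_of_nonneg
          (fun s hs => Finset.mem_powerset.2 (Finset.le_sup (f := id) hs))
          fun s _ _ => Finset.prod_nonneg fun k _ => ha0 k
    _ = ∏ k ∈ T, (1 + a k) := (Finset.prod_one_add T).symm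
    _ ≤ Real.exp (∑ k ∈ T, a k) := Real.prod_one_add_le_exp_sum T ha0
    _ ≤ Real.exp (∑' k, a k) := Real.exp_le_exp.2 (ha.sum_le_tsum T fun k _ => ha0 k)

theorem summable_nat_add_one_rpow_neg {r : ℝ} (hr : 1 < r) :
    Summable fun k : ℕ => ((k : ℝ) + 1) ^ (-r) := by
  simpa using (summable_nat_add_iff 1).2 (Real.summable_nat_rpow.2 (by linarith : -r < -1))

theorem lam_pos (σ : Finset ℕ) : 0 < lam σ :=
  Finset.prod_pos fun k _ => by positivity

theorem lam_rpow (σ : Finset ℕ) (r : ℝ) : lam σ ^ r = ∏ k ∈ σ, ((k : ℝ) + 1) ^ r :=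
  (Real.finsetProd_rpow σ _ fun k _ => by positivity) r |>.symm

theorem summable_lam_rpow_neg {r : ℝ} (hr : 1 < r) :
    Summable fun σ : Finset ℕ => lam σ ^ (-r) := by
  simpa only [lam_rpow] using
    summable_finset_prod_of_summable (fun k => by positivity) (summable_nat_add_one_rpow_neg hr)

theorem rpow_neg_two_mul_mul_sq_le {x y C p q : ℝ} (hx : 0 < x) (hy : 0 ≤ y)
    (h : y ≤ C * x ^ p) : x ^ (-(2 * q)) * y ^ 2 ≤ C ^ 2 * x ^ (-(2 * (q - p))) :=
  calc x ^ (-(2 * q)) * y ^ 2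
      ≤ x ^ (-(2 * q)) * (C * x ^ p) ^ 2 := by gcongr
    _ = C ^ 2 * x ^ (-(2 * (q - p))) := by
        rw [mul_pow, ← Real.rpow_mul_natCast hx.le, mul_left_comm, ← Real.rpow_add hx]
        ring_nf

theorem summable_and_sqrt_tsum_le_of_le {ι : Type*} {f g : ι → ℝ} {C : ℝ} (hC : 0 ≤ C)
    (hf : ∀ i, 0 ≤ f i) (hfg : ∀ i, f i ≤ C ^ 2 * g i) (hg : Summable g) :
    Summable f ∧ √(∑' i, f i) ≤ C * √(∑' i, g i) := by
  have hf_sum : Summable f := .of_nonneg_of_le hf hfg (hg.mul_left _)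
  refine ⟨hf_sum, ?_⟩
  calc √(∑' i, f i)
      ≤ √(C ^ 2 * ∑' i, g i) := by
        rw [← tsum_mul_left]
        exact Real.sqrt_le_sqrt (hf_sum.tsum_le_tsum hfg (hg.mul_left _))
    _ = C * √(∑' i, g i) := by rw [Real.sqrt_mul (by positivity), Real.sqrt_sq hC]

theorem stmt1_general (C p : ℝ) (hC : 0 ≤ C) (F : Finset ℕ → ℂ)
    (hF : ∀ σ : Finset ℕ, ‖F σ‖ ≤ C * lam σ ^ p)
    (q : ℝ) (hq : p + 1 / 2 < q) :
    Summable (fun σ : Finset ℕ => lam σ ^ (-(2 * q)) * ‖F σ‖ ^ 2) ∧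
    Summable (fun σ : Finset ℕ => lam σ ^ (-(2 * (q - p)))) ∧
    Real.sqrt (∑' σ : Finset ℕ, lam σ ^ (-(2 * q)) * ‖F σ‖ ^ 2)
      ≤ C * Real.sqrt (∑' σ : Finset ℕ, lam σ ^ (-(2 * (q - p)))) := by
  have hg : Summable fun σ : Finset ℕ => lam σ ^ (-(2 * (q - p))) :=
    summable_lam_rpow_neg (by linarith)
  obtain ⟨hf, hsqrt⟩ := summable_and_sqrt_tsum_le_of_le hC
    (fun σ => mul_nonneg (Real.rpow_nonneg (lam_pos σ).le _) (sq_nonneg _))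
    (fun σ => rpow_neg_two_mul_mul_sq_le (lam_pos σ) (norm_nonneg _) (hF σ)) hg
  exact ⟨hf, hg, hsqrt⟩

/-- If `|F(σ)| ≤ C λ_σ^p` for all `σ ∈ Γ`, then for every `q > p + 1/2` the series
`∑_σ λ_σ^{-2q} |F(σ)|²` and `∑_σ λ_σ^{-2(q-p)}` converge and
`‖F‖_{-q} ≤ C (∑_σ λ_σ^{-2(q-p)})^{1/2}`. -/
theorem stmt1 (C p : ℝ) (hC : 0 ≤ C) (hp : 0 ≤ p) (F : Finset ℕ → ℂ)
    (hF : ∀ σ : Finset ℕ, ‖F σ‖ ≤ C * lam σ ^ p)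
    (q : ℝ) (hq : p + 1 / 2 < q) :
    Summable (fun σ : Finset ℕ => lam σ ^ (-(2 * q)) * ‖F σ‖ ^ 2) ∧
    Summable (fun σ : Finset ℕ => lam σ ^ (-(2 * (q - p)))) ∧
    Real.sqrt (∑' σ : Finset ℕ, lam σ ^ (-(2 * q)) * ‖F σ‖ ^ 2)
      ≤ C * Real.sqrt (∑' σ : Finset ℕ, lam σ ^ (-(2 * (q - p)))) :=
  stmt1_general C p hC F hF q hq
end

section
/- Let C ≥ 0, p ≥ 0 be real numbers and let F : Γ → ℂ satisfy |F(σ)| ≤ C·λ_σ^p for all σ ∈ Γ. Set Ψ_n = ∑_{k=0}^{n} 𝔈_k(𝔞_k†(𝔞_k F)). Then (i) for every σ ∈ Γ, Ψ_n(σ) → F(σ) − (𝔈 F)(σ) as n → ∞, and (ii) sup_{n ≥ 0} |Ψ_n(σ)| ≤ C·λ_σ^p for all σ ∈ Γ. (By the convergence criterion for generalized functionals, this is the Clark–Ocone decomposition Φ = 𝔈Φ + ∑_{k=0}^{∞} 𝔈_k 𝔞_k† 𝔞_k Φ with strong convergence in S*(Z).) -/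
open scoped BigOperators

/-- The annihilation operator: `(𝔞_k F)(σ) = F(σ ∪ {k})` if `k ∉ σ`, else `0`. -/
def ann (k : ℕ) (F : Finset ℕ → ℂ) : Finset ℕ → ℂ :=
  fun σ => if k ∈ σ then 0 else F (insert k σ)

/-- The creation operator: `(𝔞_k† F)(σ) = F(σ \ {k})` if `k ∈ σ`, else `0`. -/
def cre (k : ℕ) (F : Finset ℕ → ℂ) : Finset ℕ → ℂ :=
  fun σ => if k ∈ σ then F (σ.erase k) else 0

/-- The conditional expectation operator:
`(𝔈_k F)(σ) = F(σ)` if every `j ∈ σ` satisfies `j ≤ k`, else `0`. -/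
def cexp (k : ℕ) (F : Finset ℕ → ℂ) : Finset ℕ → ℂ :=
  fun σ => if ∀ j ∈ σ, j ≤ k then F σ else 0

/-- The expectation operator: `(𝔈 F)(σ) = F(∅)` if `σ = ∅`, else `0`. -/
def expec (F : Finset ℕ → ℂ) : Finset ℕ → ℂ :=
  fun σ => if σ = ∅ then F ∅ else 0

/-
For `σ ≠ ∅` the term `𝔈_k 𝔞_k† 𝔞_k F` evaluated at `σ` equals `F σ` when `k = max σ` and vanishes
otherwise, so `Ψ_n(σ)` is `F σ` as soon as `σ ⊆ {0, …, n}` and `0` before; at `σ = ∅` every term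
vanishes, matching `(F - 𝔈F)(∅) = 0`. Both claims are immediate from this closed form.
-/

open Finset

theorem cexp_cre_ann_apply (k : ℕ) (F : Finset ℕ → ℂ) (σ : Finset ℕ) :
    cexp k (cre k (ann k F)) σ = if k ∈ σ ∧ ∀ j ∈ σ, j ≤ k then F σ else 0 := by
  by_cases hk : k ∈ σ
  · simp [cexp, cre, hk, ann, insert_erase hk]
  · simp [cexp, cre, hk]

theorem sum_range_cexp_cre_ann_apply (n : ℕ) (F : Finset ℕ → ℂ) (σ : Finset ℕ) :
    ∑ k ∈ range (n + 1), cexp k (cre k (ann k F)) σ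
      = if σ ⊆ range (n + 1) then F σ - expec F σ else 0 := by
  simp_rw [cexp_cre_ann_apply]
  rcases σ.eq_empty_or_nonempty with rfl | hσ
  · simp [expec]
  have eq_max'_iff (k : ℕ) : (k ∈ σ ∧ ∀ j ∈ σ, j ≤ k) ↔ k = σ.max' hσ :=
    ⟨fun hk => IsGreatest.unique (s := (σ : Set ℕ)) hk (isGreatest_max' σ hσ),
      fun hk => hk ▸ isGreatest_max' σ hσ⟩
  simp only [eq_max'_iff, sum_ite_eq', mem_range, max'_lt_iff, subset_iff, expec,
    hσ.ne_empty, if_false, sub_zero]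

theorem norm_sub_expec_le (F : Finset ℕ → ℂ) (σ : Finset ℕ) : ‖F σ - expec F σ‖ ≤ ‖F σ‖ := by
  unfold expec
  split_ifs with hσ
  · simp [hσ]
  · simp

theorem stmt10_general (C p : ℝ) (F : Finset ℕ → ℂ)
    (hF : ∀ σ : Finset ℕ, ‖F σ‖ ≤ C * lam σ ^ p) :
    (∀ σ : Finset ℕ,
      Filter.Tendsto
        (fun n : ℕ => ∑ k ∈ Finset.range (n + 1), cexp k (cre k (ann k F)) σ)
        Filter.atTop (nhds (F σ - expec F σ))) ∧
    (∀ σ : Finset ℕ, ∀ n : ℕ,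
      ‖∑ k ∈ Finset.range (n + 1), cexp k (cre k (ann k F)) σ‖
        ≤ C * lam σ ^ p) := by
  simp_rw [sum_range_cexp_cre_ann_apply]
  refine ⟨fun σ => tendsto_const_nhds.congr' ?_, fun σ n => ?_⟩
  · filter_upwards [Filter.eventually_ge_atTop (σ.sup id)] with n hn
    have hσ : σ ⊆ range (n + 1) := fun j hj =>
      mem_range_succ_iff.2 ((le_sup (f := id) hj).trans hn)
    rw [if_pos hσ]
  · split_ifs
    · exact (norm_sub_expec_le F σ).trans (hF σ)
    · exact norm_zero.trans_le ((norm_nonneg _).trans (hF σ))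

/-- If `|F(σ)| ≤ C λ_σ^p`, then the Clark–Ocone partial sums
`Ψ_n = ∑_{k=0}^n 𝔈_k 𝔞_k† 𝔞_k F` converge pointwise to `F − 𝔈F` and are
uniformly bounded by `C λ_σ^p`. -/
theorem stmt10 (C p : ℝ) (hC : 0 ≤ C) (hp : 0 ≤ p) (F : Finset ℕ → ℂ)
    (hF : ∀ σ : Finset ℕ, ‖F σ‖ ≤ C * lam σ ^ p) :
    (∀ σ : Finset ℕ,
      Filter.Tendsto
        (fun n : ℕ => ∑ k ∈ Finset.range (n + 1), cexp k (cre k (ann k F)) σ)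
        Filter.atTop (nhds (F σ - expec F σ))) ∧
    (∀ σ : Finset ℕ, ∀ n : ℕ,
      ‖∑ k ∈ Finset.range (n + 1), cexp k (cre k (ann k F)) σ‖
        ≤ C * lam σ ^ p) :=
  stmt10_general C p F hF
end

section
/- Let p ≥ 0 be a real number and let F : Γ → ℂ satisfy ∑_{σ ∈ Γ} λ_σ^{-2p} |F(σ)|² < ∞. Then the p-variance satisfies Var_p(F) = ∑_{σ ∈ Γ} λ_σ^{-2p} |F(σ) − (𝔈F)(σ)|² ≤ ∑_{k=0}^{∞} ( ∑_{σ ∈ Γ} λ_σ^{-2p} |(𝔞_k†(𝔞_k F))(σ)|² ), where the inequality is understood in the extended nonnegative reals (the right-hand side may be +∞). -/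
open scoped BigOperators

/-!
The number operator `∑ₖ 𝔞ₖ† 𝔞ₖ` acts as multiplication by `#σ`, while `F - 𝔈F` vanishes at `∅`
and agrees with `F` elsewhere. Hence `|F(σ) - 𝔈F(σ)|² ≤ #σ · |F(σ)|²` for every `σ`, and the
bound follows by weighting, summing over `σ` and exchanging the two sums in `ℝ≥0∞`.
-/

lemma cre_ann_apply (k : ℕ) (F : Finset ℕ → ℂ) (σ : Finset ℕ) :
    cre k (ann k F) σ = if k ∈ σ then F σ else 0 := by
  by_cases hk : k ∈ σ
  · simp [cre, ann, hk, Finset.insert_erase]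
  · simp [cre, hk]

lemma sub_expec_apply (F : Finset ℕ → ℂ) (σ : Finset ℕ) :
    F σ - expec F σ = if σ = ∅ then 0 else F σ := by
  by_cases hσ : σ = ∅ <;> simp [expec, hσ]

lemma tsum_ofReal_mul_norm_cre_ann_sq (c : ℝ) (F : Finset ℕ → ℂ) (σ : Finset ℕ) :
    ∑' k : ℕ, ENNReal.ofReal (c * ‖cre k (ann k F) σ‖ ^ 2)
      = σ.card • ENNReal.ofReal (c * ‖F σ‖ ^ 2) := by
  have hterm : ∀ k, ENNReal.ofReal (c * ‖cre k (ann k F) σ‖ ^ 2)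
      = if k ∈ σ then ENNReal.ofReal (c * ‖F σ‖ ^ 2) else 0 := fun k => by
    rw [cre_ann_apply]; split_ifs <;> simp
  simp_rw [hterm]
  rw [tsum_eq_sum (s := σ) fun k hk => if_neg hk, Finset.sum_ite_mem, Finset.inter_self,
    Finset.sum_const]

lemma ofReal_mul_norm_sub_expec_sq_le (c : ℝ) (F : Finset ℕ → ℂ) (σ : Finset ℕ) :
    ENNReal.ofReal (c * ‖F σ - expec F σ‖ ^ 2)
      ≤ σ.card • ENNReal.ofReal (c * ‖F σ‖ ^ 2) := by
  rw [sub_expec_apply]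
  split_ifs with hσ
  · simp
  · have hcard : 1 ≤ σ.card := Finset.card_pos.mpr (Finset.nonempty_iff_ne_empty.mpr hσ)
    rw [nsmul_eq_mul]
    exact le_mul_of_one_le_left zero_le (by exact_mod_cast hcard)

theorem tsum_ofReal_mul_norm_sub_expec_sq_le (w : Finset ℕ → ℝ) (F : Finset ℕ → ℂ) :
    ∑' σ : Finset ℕ, ENNReal.ofReal (w σ * ‖F σ - expec F σ‖ ^ 2)
      ≤ ∑' k : ℕ, ∑' σ : Finset ℕ, ENNReal.ofReal (w σ * ‖cre k (ann k F) σ‖ ^ 2) := by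
  rw [ENNReal.tsum_comm]
  refine ENNReal.tsum_le_tsum fun σ => ?_
  rw [tsum_ofReal_mul_norm_cre_ann_sq]
  exact ofReal_mul_norm_sub_expec_sq_le (w σ) F σ

theorem stmt14_general (p : ℝ) (F : Finset ℕ → ℂ) :
    ∑' σ : Finset ℕ,
        ENNReal.ofReal (lam σ ^ (-(2 * p)) * ‖F σ - expec F σ‖ ^ 2)
      ≤ ∑' k : ℕ, ∑' σ : Finset ℕ,
          ENNReal.ofReal (lam σ ^ (-(2 * p)) * ‖cre k (ann k F) σ‖ ^ 2) :=
  tsum_ofReal_mul_norm_sub_expec_sq_le (fun σ => lam σ ^ (-(2 * p))) F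

/-- The variance bound `Var_p(F) ≤ ∑_{k=0}^∞ ‖𝔞_k† 𝔞_k F‖_{-p}²`, understood in the
extended nonnegative reals. -/
theorem stmt14 (p : ℝ) (hp : 0 ≤ p) (F : Finset ℕ → ℂ)
    (hF : Summable (fun σ : Finset ℕ => lam σ ^ (-(2 * p)) * ‖F σ‖ ^ 2)) :
    ∑' σ : Finset ℕ,
        ENNReal.ofReal (lam σ ^ (-(2 * p)) * ‖F σ - expec F σ‖ ^ 2)
      ≤ ∑' k : ℕ, ∑' σ : Finset ℕ,
          ENNReal.ofReal (lam σ ^ (-(2 * p)) * ‖cre k (ann k F) σ‖ ^ 2) :=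
  stmt14_general p F
end
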